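/- Let λ_h > 0 with λ_h → 0, let α > 0, and let the weighted ℓ²-type space W = {(a_γ)_{γ∈Γ} : Σ_γ a_γ² + Σ_γ (Σ_h γ(h) λ_h^{−α}) a_γ² < ∞}, where Γ is the set of finitely supported functions γ : ℕ → ℕ∪{0}. Then the inclusion W ↪ ℓ²(Γ) is a compact operator. -/

import Mathlib

open Filter Topology

/-!
Since `λ_h → 0`, the weights `λ_h^{-α}` tend to infinity, so only finitely many multi-indices
`γ` have total weight `Σ_h γ(h) λ_h^{-α} ≤ N`. A bounded sequence of the weighted space is
coordinatewise bounded, so a diagonal (Tychonoff) argument yields a coordinatewise convergent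
subsequence. Its `ℓ²`-mass outside the finite set of weight `≤ N` is at most `C / N` uniformly in
`n`, and on that finite set coordinatewise convergence is `ℓ²`-convergence.
-/

lemma memℓp_two_iff_summable_sq {ι : Type*} {f : ι → ℝ} :
    Memℓp f 2 ↔ Summable fun i => f i ^ 2 := by
  simp [memℓp_gen_iff]

lemma tendsto_rpow_neg_atTop_of_tendsto_zero {β : Type*} {l : Filter β} {f : β → ℝ}
    (hf : Tendsto f l (𝓝 0)) (hpos : ∀ x, 0 < f x) {α : ℝ} (hα : 0 < α) :
    Tendsto (fun x => f x ^ (-α)) l atTop :=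
  (tendsto_rpow_neg_nhdsGT_zero (neg_neg_of_pos hα)).comp
    (tendsto_nhdsWithin_iff.2 ⟨hf, Eventually.of_forall hpos⟩)

section MultiIndex

variable {ι : Type*}

lemma Finsupp.apply_mul_le_sum_support_mul {v : ι → ℝ} (hv : ∀ i, 0 ≤ v i) (γ : ι →₀ ℕ)
    (i : ι) : (γ i : ℝ) * v i ≤ ∑ j ∈ γ.support, (γ j : ℝ) * v j := by
  have hterm : ∀ j ∈ γ.support, 0 ≤ (γ j : ℝ) * v j := fun j _ =>
    mul_nonneg (Nat.cast_nonneg _) (hv j)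
  by_cases hi : i ∈ γ.support
  · exact Finset.single_le_sum hterm hi
  · rw [Finsupp.notMem_support_iff.1 hi, Nat.cast_zero, zero_mul]
    exact Finset.sum_nonneg hterm

theorem finite_setOf_sum_support_mul_le {v : ι → ℝ} (hv : ∀ i, 0 < v i)
    (hv_top : Tendsto v cofinite atTop) (N : ℝ) :
    {γ : ι →₀ ℕ | ∑ i ∈ γ.support, (γ i : ℝ) * v i ≤ N}.Finite := by
  classical
  have hS : {i | v i ≤ N}.Finite := by
    simpa [not_lt] using hv_top.eventually_gt_atTop N
  let μ : ι →₀ ℕ := Finsupp.indicator hS.toFinset fun i _ => ⌊N / v i⌋₊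
  refine (Set.finite_Iic μ).subset fun γ hγ i => ?_
  have hγi : (γ i : ℝ) * v i ≤ N :=
    (Finsupp.apply_mul_le_sum_support_mul (fun j => (hv j).le) γ i).trans hγ
  by_cases hi : v i ≤ N
  · rw [Finsupp.indicator_apply, dif_pos (hS.mem_toFinset.2 hi)]
    exact Nat.le_floor ((le_div_iff₀ (hv i)).2 hγi)
  · have : γ i = 0 := by
      by_contra h0
      have : v i ≤ (γ i : ℝ) * v i :=
        le_mul_of_one_le_left (hv i).le (Nat.one_le_cast.2 (Nat.one_le_iff_ne_zero.2 h0))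
      linarith
    simp [this]

end MultiIndex

section WeightedCompactness

variable {Γ : Type*}

lemma exists_subseq_tendsto_pi_of_abs_le [Countable Γ] {a : ℕ → Γ → ℝ} {M : Γ → ℝ}
    (h : ∀ n γ, |a n γ| ≤ M γ) :
    ∃ b : Γ → ℝ, ∃ s : ℕ → ℕ, StrictMono s ∧ ∀ γ, Tendsto (fun n => a (s n) γ) atTop (𝓝 (b γ)) := by
  obtain ⟨b, -, s, hs, hconv⟩ := (isCompact_univ_pi fun γ => isCompact_Icc).tendsto_subseq
    fun n => Set.mem_univ_pi.2 fun γ => abs_le.1 (h n γ)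
  exact ⟨b, s, hs, tendsto_pi_nhds.1 hconv⟩

lemma sum_sq_le_div_of_lt_weight {w : Γ → ℝ} (hw : ∀ γ, 0 ≤ w γ) {f : Γ → ℝ}
    (hf : Summable fun γ => w γ * f γ ^ 2) {N : ℝ} (hN : 0 < N) {t : Finset Γ}
    (ht : ∀ γ ∈ t, N < w γ) : ∑ γ ∈ t, f γ ^ 2 ≤ (∑' γ, w γ * f γ ^ 2) / N := by
  rw [le_div_iff₀ hN, Finset.sum_mul]
  calc ∑ γ ∈ t, f γ ^ 2 * N ≤ ∑ γ ∈ t, w γ * f γ ^ 2 :=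
        Finset.sum_le_sum fun γ hγ => by nlinarith [ht γ hγ, sq_nonneg (f γ)]
    _ ≤ ∑' γ, w γ * f γ ^ 2 := hf.sum_le_tsum t fun γ _ => mul_nonneg (hw γ) (sq_nonneg _)

lemma sum_sq_le_of_tendsto {β : Type*} {l : Filter β} [l.NeBot] {f : β → Γ → ℝ} {b : Γ → ℝ}
    (hf : ∀ γ, Tendsto (fun n => f n γ) l (𝓝 (b γ))) (t : Finset Γ) {K : ℝ}
    (hK : ∀ n, ∑ γ ∈ t, f n γ ^ 2 ≤ K) : ∑ γ ∈ t, b γ ^ 2 ≤ K :=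
  le_of_tendsto' (tendsto_finsetSum t fun γ _ => (hf γ).pow 2) hK

lemma tendsto_tsum_zero_of_uniform_tail {β : Type*} {l : Filter β} {g : β → Γ → ℝ}
    (hg : ∀ n γ, 0 ≤ g n γ) (hlim : ∀ γ, Tendsto (fun n => g n γ) l (𝓝 0))
    (htail : ∀ ε > 0, ∃ F : Finset Γ, ∀ n, ∀ t : Finset Γ, Disjoint t F → ∑ γ ∈ t, g n γ ≤ ε) :
    Tendsto (fun n => ∑' γ, g n γ) l (𝓝 0) := by
  classical
  refine tendsto_order.2 ⟨fun c hc => Eventually.of_forall fun n =>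
    hc.trans_le (tsum_nonneg (hg n)), fun c hc => ?_⟩
  obtain ⟨F, hF⟩ := htail (c / 2) (half_pos hc)
  have hFlim : Tendsto (fun n => ∑ γ ∈ F, g n γ) l (𝓝 0) := by
    simpa using tendsto_finsetSum F fun γ _ => hlim γ
  filter_upwards [hFlim.eventually (gt_mem_nhds (half_pos hc))] with n hn
  have hsum : ∑' γ, g n γ ≤ ∑ γ ∈ F, g n γ + c / 2 := by
    refine tsum_le_of_sum_le' (add_nonneg (Finset.sum_nonneg fun γ _ => hg n γ) (half_pos hc).le)
      fun t => ?_
    rw [← Finset.sum_inter_add_sum_sdiff t F]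
    exact add_le_add
      (Finset.sum_le_sum_of_subset_of_nonneg Finset.inter_subset_right fun γ _ _ => hg n γ)
      (hF n _ Finset.sdiff_disjoint)
  linarith

theorem exists_subseq_tendsto_of_weighted_sq_bound {w : Γ → ℝ} (hw : ∀ γ, 0 ≤ w γ)
    (hfin : ∀ N, {γ | w γ ≤ N}.Finite) {a : ℕ → Γ → ℝ} (hsq : ∀ n, Summable fun γ => a n γ ^ 2)
    (hwsq : ∀ n, Summable fun γ => w γ * a n γ ^ 2) {C : ℝ} (hC : ∀ n, ∑' γ, a n γ ^ 2 ≤ C)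
    (hwC : ∀ n, ∑' γ, w γ * a n γ ^ 2 ≤ C) :
    ∃ b : Γ → ℝ, Summable (fun γ => b γ ^ 2) ∧ ∃ s : ℕ → ℕ, StrictMono s ∧
      Tendsto (fun n => ∑' γ, (a (s n) γ - b γ) ^ 2) atTop (𝓝 0) := by
  have : Countable Γ :=
    Set.countable_univ_iff.1 ((Set.countable_iUnion fun N : ℕ => (hfin N).countable).mono
      fun γ _ => Set.mem_iUnion.2 (exists_nat_ge (w γ)))
  have hsum_le : ∀ n (t : Finset Γ), ∑ γ ∈ t, a n γ ^ 2 ≤ C := fun n t =>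
    ((hsq n).sum_le_tsum t fun γ _ => sq_nonneg _).trans (hC n)
  obtain ⟨b, s, hs, hb⟩ := exists_subseq_tendsto_pi_of_abs_le (M := fun _ => √C) fun n γ =>
    Real.abs_le_sqrt (by simpa using hsum_le n {γ})
  refine ⟨b, summable_of_sum_le (fun γ => sq_nonneg _) fun t =>
    sum_sq_le_of_tendsto hb t fun n => hsum_le (s n) t, s, hs, ?_⟩
  refine tendsto_tsum_zero_of_uniform_tail (fun n γ => sq_nonneg _)
    (fun γ => by simpa using ((hb γ).sub_const (b γ)).pow 2) fun ε hε => ?_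
  obtain ⟨N, hNε, hN⟩ := (((tendsto_const_nhds (x := 4 * C)).div_atTop tendsto_id).eventually
    (ge_mem_nhds hε)).and (eventually_gt_atTop 0) |>.exists
  refine ⟨(hfin N).toFinset, fun n t ht => ?_⟩
  have hwt : ∀ γ ∈ t, N < w γ := fun γ hγ => lt_of_not_ge fun hle =>
    Finset.disjoint_left.1 ht hγ ((hfin N).mem_toFinset.2 hle)
  have ha_tail : ∀ n, ∑ γ ∈ t, a n γ ^ 2 ≤ C / N := fun n =>
    (sum_sq_le_div_of_lt_weight hw (hwsq n) hN hwt).trans (by gcongr; exact hwC n)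
  calc ∑ γ ∈ t, (a (s n) γ - b γ) ^ 2
      ≤ ∑ γ ∈ t, 2 * (a (s n) γ ^ 2 + b γ ^ 2) :=
        Finset.sum_le_sum fun γ _ => by
          simpa [sub_eq_add_neg] using add_sq_le (a := a (s n) γ) (b := -b γ)
    _ = 2 * (∑ γ ∈ t, a (s n) γ ^ 2 + ∑ γ ∈ t, b γ ^ 2) := by
        rw [← Finset.mul_sum, Finset.sum_add_distrib]
    _ ≤ 2 * (C / N + C / N) := by
        gcongr
        exacts [ha_tail (s n), sum_sq_le_of_tendsto hb t fun n => ha_tail (s n)]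
    _ = 4 * C / N := by ring
    _ ≤ ε := hNε

end WeightedCompactness

/-- the weighted sequence space
`W = {a : Γ → ℝ | Σ_γ a_γ² + Σ_γ (Σ_h γ(h) λ_h^{-α}) a_γ² < ∞}` over the set `Γ = ℕ →₀ ℕ`
of finitely supported multi-indices embeds compactly into `ℓ²(Γ)`, when `λ_h → 0` and `α > 0`:
every sequence bounded in the `W`-norm has a subsequence converging in `ℓ²(Γ)`. -/
theorem stmt_6
    (lam : ℕ → ℝ) (hlampos : ∀ k, 0 < lam k)
    (hlam0 : Tendsto lam atTop (nhds 0))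
    (α : ℝ) (hα : 0 < α)
    (a : ℕ → (ℕ →₀ ℕ) → ℝ)
    (hmem : ∀ n, Memℓp (a n) 2)
    (hwsum : ∀ n, Summable
      (fun γ : ℕ →₀ ℕ => (∑ h ∈ γ.support, (γ h : ℝ) * lam h ^ (-α)) * (a n γ) ^ 2))
    (C : ℝ)
    (hbdd : ∀ n, (∑' γ : ℕ →₀ ℕ, (a n γ) ^ 2)
      + (∑' γ : ℕ →₀ ℕ, (∑ h ∈ γ.support, (γ h : ℝ) * lam h ^ (-α)) * (a n γ) ^ 2) ≤ C) :
    ∃ b : (ℕ →₀ ℕ) → ℝ, Memℓp b 2 ∧ ∃ s : ℕ → ℕ, StrictMono s ∧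
      Tendsto (fun n => ∑' γ : ℕ →₀ ℕ, (a (s n) γ - b γ) ^ 2) atTop (nhds 0) := by
  have hv_pos : ∀ h, 0 < lam h ^ (-α) := fun h => Real.rpow_pos_of_pos (hlampos h) _
  have hv_top : Tendsto (fun h => lam h ^ (-α)) cofinite atTop :=
    Nat.cofinite_eq_atTop ▸ tendsto_rpow_neg_atTop_of_tendsto_zero hlam0 hlampos hα
  have hw : ∀ γ : ℕ →₀ ℕ, 0 ≤ ∑ h ∈ γ.support, (γ h : ℝ) * lam h ^ (-α) := fun γ =>
    Finset.sum_nonneg fun h _ => mul_nonneg (Nat.cast_nonneg _) (hv_pos h).le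
  have hsq_nonneg : ∀ n, 0 ≤ ∑' γ, a n γ ^ 2 := fun n => tsum_nonneg fun γ => sq_nonneg _
  have hwsq_nonneg : ∀ n, 0 ≤ ∑' γ : ℕ →₀ ℕ,
      (∑ h ∈ γ.support, (γ h : ℝ) * lam h ^ (-α)) * a n γ ^ 2 :=
    fun n => tsum_nonneg fun γ => mul_nonneg (hw γ) (sq_nonneg _)
  obtain ⟨b, hb, s, hs, hlim⟩ := exists_subseq_tendsto_of_weighted_sq_bound (C := C) hw
    (finite_setOf_sum_support_mul_le hv_pos hv_top)
    (fun n => memℓp_two_iff_summable_sq.1 (hmem n)) hwsum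
    (fun n => by linarith [hbdd n, hwsq_nonneg n]) (fun n => by linarith [hbdd n, hsq_nonneg n])
  exact ⟨b, memℓp_two_iff_summable_sq.2 hb, s, hs, hlim⟩
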